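/- Let X be the graph on vertices v₁,...,v₇ with edges: {v₁,v₂}, {v₅,v₁}, a double edge between v₂ and v₃, {v₃,v₄}, {v₄,v₅}, {v₅,v₆}, {v₆,v₇}, {v₅,v₇} (so v₂v₃ is a pair of parallel edges and v₅,v₆,v₇ form a triangle attached at v₅). For each prime p and n ≥ 0, let X_n be the multigraph obtained from X by the degree-p^n cyclic branched cover with trivial voltage assignment, totally ramified exactly at v₄ and v₅ (i.e., X_n has one vertex over each of v₄, v₅ and p^n vertices over every other vertex, with p^n lifted copies of each edge). Then the number of spanning trees of X_n equals p^n · 27 · 21^{p^n − 1}. -/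

import Mathlib

/-!
Let `u ≠ v` be the two ramified vertices. Since the sheets of the trivial cover meet only in the
lifts of `u` and `v`, an edge set `S` of the cover connects it iff on every sheet each vertex is
joined to `u` or to `v`, and on some sheet `u` is joined to `v`. A forest has exactly
`|V| - #components` edges, so `S` is a spanning tree iff it is connected with
`|V(X_m)| - 1 = m (|V| - 2) + 1` edges. Every sheet needs at least `|V| - 2` edges and a sheet
joining `u` to `v` at least `|V| - 1`, so the count leaves no slack: exactly one sheet carries a
spanning tree of `X` and all others carry spanning 2-forests separating `u` and `v`. Hence
`κ(X_m) = m · κ(X) · F₂(X; u, v)^(m - 1)`, and for the graph `X` here `κ = 27` and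
`F₂(v₄, v₅) = 21`, evaluated through a decidable reachability closure.
-/

structure Multigraph where
  V : Type
  E : Type
  [fintypeV : Fintype V]
  [fintypeE : Fintype E]
  [decEqV : DecidableEq V]
  ends : E → Sym2 V

attribute [instance] Multigraph.fintypeV Multigraph.fintypeE Multigraph.decEqV

namespace Multigraph

variable (G : Multigraph)

/-- Reachability in the spanning subgraph using only the edges in `S`. -/
def Reach (S : Set G.E) : G.V → G.V → Prop :=
  Relation.ReflTransGen (fun x y => ∃ e ∈ S, G.ends e = s(x, y))

/-- The multigraph is connected. -/
def Connected : Prop := ∀ x y : G.V, G.Reach Set.univ x y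

/-- The edge set `S` is acyclic: every edge of `S` is a bridge of `S`. -/
def IsForest (S : Finset G.E) : Prop :=
  ∀ e ∈ S, ∀ x y : G.V, G.ends e = s(x, y) → ¬ G.Reach ((↑S : Set G.E) \ {e}) x y

/-- `S` is the edge set of a spanning tree. -/
def IsSpanningTree (S : Finset G.E) : Prop :=
  G.IsForest S ∧ ∀ x y : G.V, G.Reach ↑S x y

/-- `S` is the edge set of a spanning 2-forest consisting of two trees, one
containing `u`, the other containing `v`, whose vertex sets partition the vertices. -/
def IsTwoForest (u v : G.V) (S : Finset G.E) : Prop :=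
  G.IsForest S ∧ ¬ G.Reach ↑S u v ∧ ∀ x : G.V, G.Reach ↑S u x ∨ G.Reach ↑S v x

/-- The number of spanning trees. -/
noncomputable def treeCount : ℕ :=
  Nat.card {S : Finset G.E // G.IsSpanningTree S}

/-- The number of spanning 2-forests separating `u` and `v`. -/
noncomputable def twoForestCount (u v : G.V) : ℕ :=
  Nat.card {S : Finset G.E // G.IsTwoForest u v S}

end Multigraph

/-- The lift of a base vertex to the sheet `τ` of the trivial-voltage branched cover:
ramified vertices (those satisfying `R`) have a single vertex above them, all other
vertices have `m` vertices above them. -/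
def coverLift (G : Multigraph) (R : G.V → Prop) [DecidablePred R] (m : ℕ) (τ : Fin m)
    (v : G.V) : Σ v : G.V, Fin (if R v then 1 else m) :=
  ⟨v, if h : R v then ⟨0, by simp [h]⟩ else ⟨τ.1, by simp [h, τ.isLt]⟩⟩

/-- The degree-`m` cyclic branched cover of `G` with trivial voltage assignment, totally
ramified exactly at the vertices satisfying `R`: there is one vertex over each ramified
vertex, `m` vertices over every other vertex, and `m` lifted copies of each edge. -/
def trivialCover (G : Multigraph) (R : G.V → Prop) [DecidablePred R] (m : ℕ) :
    Multigraph where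
  V := Σ v : G.V, Fin (if R v then 1 else m)
  E := G.E × Fin m
  ends := fun e => (G.ends e.1).map (coverLift G R m e.2)

/-- The base graph `X` on vertices `v₁, …, v₇` (encoded as `Fin 7`, `v_i ↦ i - 1`) with
edges `{v₁,v₂}`, `{v₅,v₁}`, a double edge `v₂v₃`, `{v₃,v₄}`, `{v₄,v₅}`, `{v₅,v₆}`,
`{v₆,v₇}`, `{v₅,v₇}`. -/
def X15 : Multigraph where
  V := Fin 7
  E := Fin 9
  ends := ![s(0, 1), s(4, 0), s(1, 2), s(1, 2), s(2, 3), s(3, 4), s(4, 5), s(5, 6), s(4, 6)]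

open Finset

namespace Multigraph

variable {G : Multigraph} {S T : Set G.E} {e : G.E} {a b x y z : G.V}

theorem reach_of_ends (he : e ∈ S) (h : G.ends e = s(x, y)) : G.Reach S x y :=
  .single ⟨e, he, h⟩

theorem Reach.trans (h : G.Reach S x y) (h' : G.Reach S y z) : G.Reach S x z :=
  Relation.ReflTransGen.trans h h'

theorem Reach.symm (h : G.Reach S x y) : G.Reach S y x := by
  induction h with
  | refl => exact .refl
  | tail _ hstep ih =>
    obtain ⟨e, he, hends⟩ := hstep
    exact (reach_of_ends he (hends.trans Sym2.eq_swap)).trans ih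

theorem Reach.mono (hST : S ⊆ T) (h : G.Reach S x y) : G.Reach T x y :=
  Relation.ReflTransGen.mono (fun _ _ ⟨e, he, h⟩ => ⟨e, hST he, h⟩) _ _ h

theorem forall_reach_iff (a : G.V) : (∀ x y, G.Reach S x y) ↔ ∀ y, G.Reach S a y :=
  ⟨fun h => h a, fun h x y => (h x).symm.trans (h y)⟩

theorem Reach.iff_of_forall_ends {p : G.V → Prop}
    (hp : ∀ e ∈ S, ∀ x y, G.ends e = s(x, y) → (p x ↔ p y)) (h : G.Reach S x y) :
    p x ↔ p y := by
  induction h with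
  | refl => rfl
  | tail _ hstep ih =>
    obtain ⟨e, he, hends⟩ := hstep
    exact ih.trans (hp e he _ _ hends)

theorem reach_iff_of_ends (he : e ∈ S) (h : G.ends e = s(a, b)) :
    G.Reach S x a ↔ G.Reach S x b :=
  ⟨fun hx => hx.trans (reach_of_ends he h), fun hx => hx.trans (reach_of_ends he h).symm⟩

theorem eq_of_reach_empty (h : G.Reach ∅ x y) : x = y :=
  h.cases_head.resolve_right fun ⟨_, ⟨_, he, _⟩, _⟩ => he

theorem Reach.cases_of_insert (he : G.ends e = s(a, b)) (h : G.Reach (insert e S) x y) :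
    G.Reach S x y ∨ (G.Reach S x a ∧ G.Reach S b y) ∨ (G.Reach S x b ∧ G.Reach S a y) := by
  induction h with
  | refl => exact .inl .refl
  | tail _ hstep ih =>
    obtain ⟨f, hf, hends⟩ := hstep
    rcases hf with rfl | hf
    · rw [he, Sym2.eq_iff] at hends
      rcases hends with ⟨rfl, rfl⟩ | ⟨rfl, rfl⟩ <;> rcases ih with h | ⟨h, -⟩ | ⟨h, -⟩ <;>
        first | exact .inl h | exact .inr (.inl ⟨h, .refl⟩) | exact .inr (.inr ⟨h, .refl⟩)
    · have hfS := reach_of_ends hf hends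
      rcases ih with h | ⟨h, h'⟩ | ⟨h, h'⟩
      · exact .inl (h.trans hfS)
      · exact .inr (.inl ⟨h, h'.trans hfS⟩)
      · exact .inr (.inr ⟨h, h'.trans hfS⟩)

theorem reach_diff_singleton_iff (he : G.ends e = s(a, b)) (hab : G.Reach (S \ {e}) a b) :
    G.Reach (S \ {e}) x y ↔ G.Reach S x y := by
  refine ⟨Reach.mono Set.sdiff_subset, fun h => ?_⟩
  induction h with
  | refl => exact .refl
  | tail _ hstep ih =>
    obtain ⟨f, hf, hends⟩ := hstep
    by_cases hfe : f = e
    · subst hfe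
      rw [he, Sym2.eq_iff] at hends
      rcases hends with ⟨rfl, rfl⟩ | ⟨rfl, rfl⟩
      · exact ih.trans hab
      · exact ih.trans hab.symm
    · exact ih.trans (reach_of_ends ⟨hf, hfe⟩ hends)

variable (G) in
def reachSetoid (S : Set G.E) : Setoid G.V where
  r := G.Reach S
  iseqv := ⟨fun _ => .refl, Reach.symm, Reach.trans⟩

variable (G) in
noncomputable def numComponents (S : Set G.E) : ℕ :=
  Nat.card (Quotient (G.reachSetoid S))

theorem numComponents_empty : G.numComponents ∅ = Fintype.card G.V := by
  rw [← Nat.card_eq_fintype_card]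
  refine (Nat.card_eq_of_bijective _ ⟨fun x y hxy => ?_, Quotient.mk_surjective⟩).symm
  exact eq_of_reach_empty (Quotient.exact hxy)

theorem numComponents_le_numComponents_insert_add_one (e : G.E) :
    G.numComponents S ≤ G.numComponents (insert e S) + 1 := by
  classical
  rcases hab : G.ends e with ⟨a, b⟩
  let f : Quotient (G.reachSetoid S) → Option (Quotient (G.reachSetoid (insert e S))) :=
    Quotient.lift (fun x => if G.Reach S x a then none else some (Quotient.mk _ x)) <| by
      intro x y (hxy : G.Reach S x y)
      by_cases hxa : G.Reach S x a
      · simp only [hxa, hxy.symm.trans hxa, if_true]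
      · have hya : ¬ G.Reach S y a := fun h => hxa (hxy.trans h)
        simp only [hxa, hya, if_false, Option.some.injEq]
        exact Quotient.sound (hxy.mono (Set.subset_insert _ _))
  have hf : Function.Injective f := by
    rintro ⟨x⟩ ⟨y⟩ hxy
    change (if G.Reach S x a then none else some (Quotient.mk _ x)) =
      if G.Reach S y a then none else some (Quotient.mk _ y) at hxy
    apply Quotient.sound
    by_cases hxa : G.Reach S x a <;> by_cases hya : G.Reach S y a <;>
      simp only [hxa, hya, if_true, if_false, reduceCtorEq, Option.some.injEq] at hxy
    · exact hxa.trans hya.symm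
    · rcases Reach.cases_of_insert hab (Quotient.exact hxy) with h | ⟨h, -⟩ | ⟨-, h⟩
      · exact h
      · exact absurd h hxa
      · exact absurd h.symm hya
  have := Nat.card_le_card_of_injective f hf
  rwa [Finite.card_option] at this

theorem numComponents_insert_lt (he : G.ends e = s(a, b)) (hab : ¬ G.Reach S a b) :
    G.numComponents (insert e S) < G.numComponents S := by
  let f : Quotient (G.reachSetoid S) → Quotient (G.reachSetoid (insert e S)) :=
    Quotient.map id fun _ _ h => Reach.mono (Set.subset_insert e S) h
  have hsurj : Function.Surjective f := Quotient.ind fun x => ⟨Quotient.mk _ x, rfl⟩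
  have hninj : ¬ Function.Injective f := fun hinj =>
    hab (Quotient.exact (hinj (Quotient.sound (reach_of_ends (Set.mem_insert e S) he))))
  exact lt_of_not_ge fun h => hninj (hsurj.bijective_of_nat_card_le h).1

theorem numComponents_congr (h : ∀ x y, G.Reach S x y ↔ G.Reach T x y) :
    G.numComponents S = G.numComponents T := by
  have : G.reachSetoid S = G.reachSetoid T := Setoid.ext h
  rw [numComponents, this, numComponents]

theorem numComponents_le_card {A : Finset G.V} (hA : ∀ x, ∃ a ∈ A, G.Reach S a x) :
    G.numComponents S ≤ #A := by
  have hsurj : Function.Surjective fun a : A => Quotient.mk (G.reachSetoid S) a.1 := by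
    refine Quotient.ind fun x => ?_
    obtain ⟨a, ha, hax⟩ := hA x
    exact ⟨⟨a, ha⟩, Quotient.sound hax⟩
  have := Nat.card_le_card_of_surjective _ hsurj
  rwa [Nat.card_eq_fintype_card (α := A), Fintype.card_coe] at this

theorem numComponents_eq_one (x : G.V) (hS : ∀ y, G.Reach S x y) : G.numComponents S = 1 :=
  Nat.card_eq_one_iff_exists.2 ⟨Quotient.mk _ x, Quotient.ind fun y => Quotient.sound (hS y).symm⟩

theorem numComponents_eq_two (huv : ¬ G.Reach S a b) (hS : ∀ x, G.Reach S a x ∨ G.Reach S b x) :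
    G.numComponents S = 2 := by
  refine Nat.card_eq_two_iff.2
    ⟨Quotient.mk _ a, Quotient.mk _ b, fun h => huv (Quotient.exact h), ?_⟩
  refine Set.eq_univ_of_forall (Quotient.ind fun x => ?_)
  rcases hS x with h | h
  · exact .inl (Quotient.sound h.symm)
  · exact .inr (Quotient.sound h.symm)

theorem card_le_card_add_numComponents (S : Finset G.E) :
    Fintype.card G.V ≤ #S + G.numComponents S := by
  classical
  induction S using Finset.induction_on with
  | empty => simp [numComponents_empty]
  | insert e S he ih =>
    have := numComponents_le_numComponents_insert_add_one (S := (S : Set G.E)) e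
    rw [card_insert_of_notMem he, coe_insert]
    omega

theorem IsForest.mono {S T : Finset G.E} (hS : G.IsForest S) (hTS : T ⊆ S) : G.IsForest T :=
  fun e he x y hends h => hS e (hTS he) x y hends (h.mono (Set.sdiff_subset_sdiff_left hTS))

theorem IsForest.card_add_numComponents_le {S : Finset G.E} (hS : G.IsForest S) :
    #S + G.numComponents S ≤ Fintype.card G.V := by
  classical
  induction S using Finset.induction_on with
  | empty => simp [numComponents_empty]
  | insert e S he ih =>
    rcases hab : G.ends e with ⟨a, b⟩
    have hsep : ¬ G.Reach S a b := by
      have := hS e (mem_insert_self e S) a b hab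
      rwa [coe_insert, Set.insert_sdiff_self_of_notMem (mem_coe.not.2 he)] at this
    have := numComponents_insert_lt hab hsep
    rw [card_insert_of_notMem he, coe_insert]
    have := ih (hS.mono (subset_insert e S))
    omega

theorem isForest_iff_card_add_numComponents {S : Finset G.E} :
    G.IsForest S ↔ #S + G.numComponents S = Fintype.card G.V := by
  classical
  refine ⟨fun hS => hS.card_add_numComponents_le.antisymm (card_le_card_add_numComponents S), ?_⟩
  intro hcard e he x y hends hxy
  have hcomp : G.numComponents ↑(S.erase e) = G.numComponents S := by
    rw [coe_erase]
    exact numComponents_congr fun _ _ => reach_diff_singleton_iff hends hxy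
  have := card_le_card_add_numComponents (S.erase e)
  rw [card_erase_of_mem he, hcomp] at this
  have := card_pos.2 ⟨e, he⟩
  omega

theorem card_le_card_add_one_of_forall_reach {S : Finset G.E} (hS : ∀ y, G.Reach S a y) :
    Fintype.card G.V ≤ #S + 1 :=
  numComponents_eq_one a hS ▸ card_le_card_add_numComponents S

theorem card_le_card_add_two_of_forall_reach_or {S : Finset G.E}
    (hS : ∀ x, G.Reach S a x ∨ G.Reach S b x) :
    Fintype.card G.V ≤ #S + 2 := by
  classical
  have hA : ∀ x, ∃ c ∈ ({a, b} : Finset G.V), G.Reach S c x := fun x => by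
    rcases hS x with h | h
    · exact ⟨a, mem_insert_self a _, h⟩
    · exact ⟨b, mem_insert_of_mem (mem_singleton_self b), h⟩
  have := (numComponents_le_card hA).trans card_le_two
  have := card_le_card_add_numComponents S
  omega

theorem forall_reach_of_forall_reach_or (hab : G.Reach S a b)
    (hS : ∀ x, G.Reach S a x ∨ G.Reach S b x) : ∀ x, G.Reach S a x :=
  fun x => (hS x).elim id hab.trans

theorem isSpanningTree_iff [Nonempty G.V] {S : Finset G.E} :
    G.IsSpanningTree S ↔ (∀ x y, G.Reach S x y) ∧ #S + 1 = Fintype.card G.V := by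
  obtain ⟨a⟩ := ‹Nonempty G.V›
  rw [IsSpanningTree, isForest_iff_card_add_numComponents, and_comm]
  exact and_congr_right fun hS => by rw [numComponents_eq_one a ((forall_reach_iff a).1 hS)]

theorem isTwoForest_iff {S : Finset G.E} :
    G.IsTwoForest a b S ↔
      (¬ G.Reach S a b ∧ ∀ x, G.Reach S a x ∨ G.Reach S b x) ∧ #S + 2 = Fintype.card G.V := by
  rw [IsTwoForest, isForest_iff_card_add_numComponents, and_comm]
  exact and_congr_right fun hS => by rw [numComponents_eq_two hS.1 hS.2]

end Multigraph

theorem Finset.isFixedPt_iterate_card {α : Type*} [Fintype α] {f : Finset α → Finset α}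
    (hf : ∀ s, s ⊆ f s) (s : Finset α) : Function.IsFixedPt f (f^[Fintype.card α] s) := by
  set n := Fintype.card α
  by_contra hne
  have hstrict : ∀ k ≤ n, f^[k] s ⊂ f^[k + 1] s := by
    intro k hk
    rw [Function.iterate_succ_apply']
    refine ssubset_of_subset_of_ne (hf _) fun hfix => hne ?_
    rw [← Nat.sub_add_cancel hk, Function.iterate_add_apply, Function.iterate_fixed hfix.symm]
    exact hfix.symm
  have hcard : ∀ k ≤ n + 1, k ≤ #(f^[k] s) := by
    intro k hk
    induction k with
    | zero => exact Nat.zero_le _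
    | succ k ih => exact (ih (by omega)).trans_lt (card_lt_card (hstrict k (by omega)))
  have := hcard (n + 1) le_rfl
  have := card_le_univ (f^[n + 1] s)
  omega

def Sym2.stepFrom {α : Type*} [DecidableEq α] (A : Finset α) : Sym2 α → Finset α :=
  Sym2.lift ⟨fun a b => (if a ∈ A then {b} else ∅) ∪ (if b ∈ A then {a} else ∅),
    fun _ _ => Finset.union_comm _ _⟩

theorem Sym2.mem_stepFrom {α : Type*} [DecidableEq α] {A : Finset α} {z : Sym2 α} {y : α} :
    y ∈ z.stepFrom A ↔ ∃ x ∈ A, z = s(x, y) := by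
  induction z using Sym2.ind with
  | _ a b =>
    simp only [stepFrom, Sym2.lift_mk, mem_union, Sym2.eq_iff]
    split_ifs <;> aesop

namespace Multigraph

variable (G : Multigraph)

-- Computed edge by edge rather than by filtering the vertices, which keeps kernel evaluation cheap.
def reachStep (T : Finset G.E) (A : Finset G.V) : Finset G.V :=
  A ∪ T.biUnion fun e => (G.ends e).stepFrom A

def reachClosure (T : Finset G.E) (x : G.V) : Finset G.V :=
  (G.reachStep T)^[Fintype.card G.V] {x}

variable {G} {T : Finset G.E} {A : Finset G.V} {x y : G.V}

theorem mem_reachStep : y ∈ G.reachStep T A ↔ y ∈ A ∨ ∃ e ∈ T, ∃ x ∈ A, G.ends e = s(x, y) := by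
  simp only [reachStep, mem_union, mem_biUnion, Sym2.mem_stepFrom]

theorem reach_of_mem_iterate_reachStep {k : ℕ} (hy : y ∈ (G.reachStep T)^[k] {x}) :
    G.Reach T x y := by
  induction k generalizing y with
  | zero =>
    rw [Function.iterate_zero_apply, mem_singleton] at hy
    exact hy ▸ .refl
  | succ k ih =>
    rw [Function.iterate_succ_apply', mem_reachStep] at hy
    rcases hy with hy | ⟨e, he, z, hz, hends⟩
    · exact ih hy
    · exact (ih hz).trans (reach_of_ends he hends)

theorem mem_reachClosure : y ∈ G.reachClosure T x ↔ G.Reach T x y := by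
  refine ⟨reach_of_mem_iterate_reachStep, fun h => ?_⟩
  have hfix := Finset.isFixedPt_iterate_card (f := G.reachStep T) (fun _ => subset_union_left) {x}
  have hx : ∀ k, x ∈ (G.reachStep T)^[k] {x} := fun k => by
    induction k with
    | zero => exact mem_singleton_self x
    | succ k ih => exact Function.iterate_succ_apply' .. ▸ mem_reachStep.2 (.inl ih)
  refine (h.iff_of_forall_ends (p := (· ∈ G.reachClosure T x)) fun e he a b hends => ?_).1 (hx _)
  constructor <;> intro hmem <;> rw [reachClosure, ← hfix.eq, mem_reachStep] <;> right
  · exact ⟨e, he, a, hmem, hends⟩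
  · exact ⟨e, he, b, hmem, hends.trans Sym2.eq_swap⟩

instance (T : Finset G.E) (x y : G.V) : Decidable (G.Reach T x y) :=
  decidable_of_iff _ mem_reachClosure

theorem treeCount_eq_card_filter (a : G.V) :
    G.treeCount = #{S : Finset G.E | #S + 1 = Fintype.card G.V ∧ ∀ y, G.Reach S a y} := by
  have : Nonempty G.V := ⟨a⟩
  rw [treeCount, ← Fintype.card_subtype, ← Nat.card_eq_fintype_card]
  exact Nat.card_congr (Equiv.subtypeEquivRight fun S => by
    rw [isSpanningTree_iff, forall_reach_iff a, and_comm])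

theorem twoForestCount_eq_card_filter (a b : G.V) :
    G.twoForestCount a b = #{S : Finset G.E | #S + 2 = Fintype.card G.V ∧
      ¬ G.Reach S a b ∧ ∀ x, G.Reach S a x ∨ G.Reach S b x} := by
  rw [twoForestCount, ← Fintype.card_subtype, ← Nat.card_eq_fintype_card]
  exact Nat.card_congr (Equiv.subtypeEquivRight fun S => by rw [isTwoForest_iff, and_comm])

end Multigraph

theorem Finset.card_filter_exists_forall_ne {ι β : Type*} [Fintype ι] [DecidableEq ι]
    [Fintype β] [DecidableEq β] {A B : Finset β} (hAB : Disjoint A B) :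
    #{f : ι → β | ∃ i, f i ∈ A ∧ ∀ j ≠ i, f j ∈ B} =
      Fintype.card ι * (#A * #B ^ (Fintype.card ι - 1)) := by
  have hunion : ({f : ι → β | ∃ i, f i ∈ A ∧ ∀ j ≠ i, f j ∈ B} : Finset (ι → β)) =
      univ.biUnion fun i => Fintype.piFinset (Function.update (fun _ => B) i A) := by
    ext f
    simp only [mem_filter, mem_univ, true_and, mem_biUnion, Fintype.mem_piFinset]
    exact exists_congr fun i => (Function.forall_update_iff _ fun j (s : Finset β) => f j ∈ s).symm
  have hcard (i : ι) :
      #(Fintype.piFinset (Function.update (fun _ => B) i A)) = #A * #B ^ (Fintype.card ι - 1) := by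
    rw [Fintype.card_piFinset]
    rw [prod_congr rfl fun j _ => (Function.apply_update (fun _ => card) (fun _ => B) i A j)]
    rw [prod_update_of_mem (mem_univ i), prod_const, ← compl_eq_univ_sdiff, card_compl,
      card_singleton]
  rw [hunion, card_biUnion, sum_congr rfl fun i _ => hcard i, sum_const, card_univ, smul_eq_mul]
  intro i _ j _ hij
  refine Fintype.piFinset_disjoint_of_disjoint _ _ (a := j) ?_
  simpa [Function.update_of_ne hij.symm] using hAB.symm

theorem Finset.eq_add_one_and_eq_of_sum_eq {ι : Type*} [Fintype ι] {f : ι → ℕ} {k : ℕ} {i : ι}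
    (hle : ∀ j, k ≤ f j) (hi : k < f i) (hsum : ∑ j, f j = Fintype.card ι * k + 1) :
    f i = k + 1 ∧ ∀ j ≠ i, f j = k := by
  classical
  have hexcess : ∑ j, (f j - k) = 1 := by
    have : ∑ j, f j = ∑ j, (f j - k) + Fintype.card ι * k := by
      rw [← smul_eq_mul, ← card_univ, ← sum_const, ← sum_add_distrib]
      exact sum_congr rfl fun j _ => (Nat.sub_add_cancel (hle j)).symm
    omega
  rw [← add_sum_erase _ _ (mem_univ i)] at hexcess
  have hrest := sum_eq_zero_iff.1 (show ∑ j ∈ univ.erase i, (f j - k) = 0 by omega)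
  refine ⟨by omega, fun j hj => ?_⟩
  have := hrest j (mem_erase.2 ⟨hj, mem_univ j⟩)
  have := hle j
  omega

section Sheets

variable {α ι : Type*} [Fintype α]

open Classical in
noncomputable def Finset.sheet (S : Finset (α × ι)) (i : ι) : Finset α := {a | (a, i) ∈ S}

theorem Finset.mem_sheet {S : Finset (α × ι)} {i : ι} {a : α} : a ∈ S.sheet i ↔ (a, i) ∈ S := by
  simp [sheet]

open Classical in
noncomputable def Finset.sheetEquiv [Fintype ι] : Finset (α × ι) ≃ (ι → Finset α) where
  toFun S := S.sheet
  invFun f := {p | p.1 ∈ f p.2}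
  left_inv S := by ext; simp [mem_sheet]
  right_inv f := by ext; simp [mem_sheet]

theorem Finset.card_eq_sum_card_sheet [Fintype ι] [DecidableEq ι] (S : Finset (α × ι)) :
    #S = ∑ i, #(S.sheet i) := by
  rw [card_eq_sum_card_fiberwise fun p _ => mem_univ p.2]
  refine sum_congr rfl fun i _ => card_nbij' Prod.fst (·, i) ?_ ?_ ?_ ?_
  · rintro ⟨a, j⟩ h
    rw [mem_coe, mem_filter] at h
    exact mem_sheet.2 (h.2 ▸ h.1)
  · intro a h
    exact mem_filter.2 ⟨mem_sheet.1 h, rfl⟩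
  · rintro ⟨a, j⟩ h
    rw [mem_coe, mem_filter] at h
    exact congrArg _ h.2.symm
  · intro a _
    rfl

end Sheets

section TrivialCover

open Multigraph

variable {G : Multigraph} {R : G.V → Prop} [DecidablePred R] {m : ℕ}

theorem coverLift_snd_val (τ : Fin m) (v : G.V) :
    ((coverLift G R m τ v).2 : ℕ) = if R v then 0 else (τ : ℕ) := by
  by_cases hv : R v <;> simp [coverLift, hv]

theorem coverLift_eq_coverLift_iff {τ τ' : Fin m} {v : G.V} :
    coverLift G R m τ v = coverLift G R m τ' v ↔ R v ∨ τ = τ' := by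
  constructor
  · intro h
    have := congrArg (fun x => (x.2 : ℕ)) h
    simp only [coverLift_snd_val] at this
    split_ifs at this with hv
    · exact .inl hv
    · exact .inr (Fin.ext this)
  · rintro (hv | rfl)
    · exact Sigma.ext rfl (heq_of_eq (Fin.ext (by simp only [coverLift_snd_val, hv, if_true])))
    · rfl

theorem exists_coverLift_eq (hm : 0 < m) (x : (trivialCover G R m).V) :
    ∃ τ, coverLift G R m τ x.1 = x := by
  obtain ⟨v, k⟩ := x
  by_cases hv : R v
  · refine ⟨⟨0, hm⟩, Sigma.ext rfl (heq_of_eq (Fin.ext ?_))⟩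
    have := k.2
    simp only [hv, if_true] at this
    simp only [coverLift_snd_val, hv, if_true]
    omega
  · refine ⟨⟨k, by simpa [hv] using k.2⟩, Sigma.ext rfl (heq_of_eq (Fin.ext ?_))⟩
    simp only [coverLift_snd_val, hv, if_false]

theorem trivialCover_ends {e : G.E} {a b : G.V} (h : G.ends e = s(a, b)) (τ : Fin m) :
    (trivialCover G R m).ends (e, τ) = s(coverLift G R m τ a, coverLift G R m τ b) := by
  change (G.ends e).map _ = _
  rw [h, Sym2.map_mk]

variable {S : Finset (trivialCover G R m).E} {τ : Fin m} {x y : G.V}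

theorem Multigraph.Reach.coverLift (h : G.Reach (S.sheet τ) x y) :
    (trivialCover G R m).Reach S (coverLift G R m τ x) (coverLift G R m τ y) :=
  Relation.ReflTransGen.lift _
    (fun _ _ ⟨e, he, hends⟩ => ⟨(e, τ), mem_sheet.1 he, trivialCover_ends hends τ⟩) _ _ h

theorem iff_of_reach_coverLift {B : Fin m → G.V → Prop}
    (hram : ∀ w, R w → ∀ σ σ', B σ w → B σ' w)
    (hsheet : ∀ σ, ∀ e ∈ S.sheet σ, ∀ a b, G.ends e = s(a, b) → (B σ a ↔ B σ b))
    {τ' : Fin m} (h : (trivialCover G R m).Reach S (coverLift G R m τ x) (coverLift G R m τ' y)) :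
    B τ x ↔ B τ' y := by
  let p : (trivialCover G R m).V → Prop := fun z => ∃ σ, coverLift G R m σ z.1 = z ∧ B σ z.1
  have hp : ∀ σ w, p (coverLift G R m σ w) ↔ B σ w := by
    refine fun σ w => ⟨fun ⟨σ', hσ', hB⟩ => ?_, fun hB => ⟨σ, rfl, hB⟩⟩
    rcases coverLift_eq_coverLift_iff.1 hσ' with hw | rfl
    · exact hram w hw σ' σ hB
    · exact hB
  rw [← hp, ← hp]
  refine h.iff_of_forall_ends fun eσ he z z' hends => ?_
  obtain ⟨e, σ⟩ := eσ
  rcases hab : G.ends e with ⟨a, b⟩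
  rw [trivialCover_ends hab] at hends
  have := hsheet σ e (mem_sheet.2 he) a b hab
  rcases Sym2.eq_iff.1 hends with ⟨rfl, rfl⟩ | ⟨rfl, rfl⟩
  · rw [hp, hp]; exact this
  · rw [hp, hp]; exact this.symm

variable {u v : G.V}

theorem card_trivialCover_V (huv : u ≠ v) (hR : ∀ w, R w ↔ w = u ∨ w = v) :
    Fintype.card (trivialCover G R m).V = m * (Fintype.card G.V - 2) + 2 := by
  classical
  have hram : #{w | R w} = 2 := by
    rw [show ({w | R w} : Finset G.V) = {u, v} by ext w; simp [hR], card_pair huv]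
  have hsplit := card_filter_add_card_filter_not (s := univ) R
  rw [hram, card_univ] at hsplit
  rw [← Nat.card_eq_fintype_card]
  change Nat.card (Σ w : G.V, Fin (if R w then 1 else m)) = _
  simp only [Nat.card_eq_fintype_card, Fintype.card_sigma, Fintype.card_fin]
  rw [sum_ite, sum_const, sum_const, smul_eq_mul, smul_eq_mul, hram,
    show #{w | ¬ R w} = Fintype.card G.V - 2 by omega]
  ring

theorem forall_reach_trivialCover_iff (hm : 0 < m) (hR : ∀ w, R w ↔ w = u ∨ w = v) :
    (∀ x y, (trivialCover G R m).Reach S x y) ↔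
      (∀ τ x, G.Reach (S.sheet τ) u x ∨ G.Reach (S.sheet τ) v x) ∧
        ∃ σ, G.Reach (S.sheet σ) u v := by
  have hu : ∀ σ σ', coverLift G R m σ u = coverLift G R m σ' u := fun σ σ' =>
    coverLift_eq_coverLift_iff.2 (.inl ((hR u).2 (.inl rfl)))
  have hv : ∀ σ σ', coverLift G R m σ v = coverLift G R m σ' v := fun σ σ' =>
    coverLift_eq_coverLift_iff.2 (.inl ((hR v).2 (.inr rfl)))
  constructor
  · intro hC
    refine ⟨fun τ x => ?_, ?_⟩
    · refine (iff_of_reach_coverLift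
        (B := fun σ a => σ = τ → G.Reach (S.sheet τ) u a ∨ G.Reach (S.sheet τ) v a) ?_ ?_
        (hC (coverLift G R m τ u) (coverLift G R m τ x))).1 (fun _ => .inl .refl) rfl
      · rintro w hw - - - -
        rcases (hR w).1 hw with rfl | rfl
        exacts [.inl .refl, .inr .refl]
      · rintro σ e he a b hab
        refine imp_congr_right fun hσ => ?_
        subst hσ
        exact or_congr (reach_iff_of_ends he hab) (reach_iff_of_ends he hab)
    · by_contra hsep
      push Not at hsep
      refine hsep ⟨0, hm⟩ ((iff_of_reach_coverLift (B := fun σ a => G.Reach (S.sheet σ) u a) ?_ ?_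
        (hC (coverLift G R m ⟨0, hm⟩ u) (coverLift G R m ⟨0, hm⟩ v))).1 .refl)
      · rintro w hw σ σ' hσ
        rcases (hR w).1 hw with rfl | rfl
        exacts [.refl, absurd hσ (hsep σ)]
      · exact fun σ e he a b hab => reach_iff_of_ends he hab
  · rintro ⟨hspan, σ, hσ⟩
    suffices h : ∀ y, (trivialCover G R m).Reach S (coverLift G R m σ u) y from
      fun x y => (h x).symm.trans (h y)
    intro y
    obtain ⟨τ, hτ⟩ := exists_coverLift_eq hm y
    rw [← hτ, hu σ τ]
    rcases hspan τ y.1 with h | h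
    · exact h.coverLift
    · exact (hu τ σ ▸ hσ.coverLift).trans (hv σ τ ▸ h.coverLift)

theorem isSpanningTree_trivialCover_iff (hm : 0 < m) (huv : u ≠ v)
    (hR : ∀ w, R w ↔ w = u ∨ w = v) :
    (trivialCover G R m).IsSpanningTree S ↔
      ∃ σ, G.IsSpanningTree (S.sheet σ) ∧ ∀ τ ≠ σ, G.IsTwoForest u v (S.sheet τ) := by
  have hV : 2 ≤ Fintype.card G.V := by
    classical
    simpa [card_pair huv] using card_le_univ ({u, v} : Finset G.V)
  have : Nonempty (trivialCover G R m).V := ⟨coverLift G R m ⟨0, hm⟩ u⟩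
  have : Nonempty G.V := ⟨u⟩
  have hS : #S = ∑ τ, #(S.sheet τ) := card_eq_sum_card_sheet S
  rw [isSpanningTree_iff, forall_reach_trivialCover_iff hm hR, hS, card_trivialCover_V huv hR]
  simp_rw [isSpanningTree_iff, forall_reach_iff u, isTwoForest_iff]
  set k := Fintype.card G.V - 2
  constructor
  · rintro ⟨⟨hspan, σ, hσ⟩, hcard⟩
    have hσu := forall_reach_of_forall_reach_or hσ (hspan σ)
    -- every sheet has at least `k` edges and the sheet `σ` at least `k + 1`: no slack is left
    obtain ⟨hσk, hτk⟩ := eq_add_one_and_eq_of_sum_eq (f := fun τ => #(S.sheet τ)) (k := k) (i := σ)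
      (fun τ => by have := card_le_card_add_two_of_forall_reach_or (hspan τ); omega)
      (by have := card_le_card_add_one_of_forall_reach hσu; omega)
      (by rw [Fintype.card_fin]; omega)
    refine ⟨σ, ⟨hσu, by omega⟩, fun τ hτ => ⟨⟨fun huv' => ?_, hspan τ⟩, by rw [hτk τ hτ]; omega⟩⟩
    have := card_le_card_add_one_of_forall_reach (forall_reach_of_forall_reach_or huv' (hspan τ))
    have := hτk τ hτ
    omega
  · rintro ⟨σ, ⟨hσu, hσcard⟩, hrest⟩
    refine ⟨⟨fun τ x => ?_, σ, hσu v⟩, ?_⟩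
    · rcases eq_or_ne τ σ with rfl | hτ
      · exact .inl (hσu x)
      · exact (hrest τ hτ).1.2 x
    · have hsheet : ∀ τ, #(S.sheet τ) = k + if τ = σ then 1 else 0 := fun τ => by
        split_ifs with hτ
        · subst hτ; omega
        · have := (hrest τ hτ).2; omega
      rw [sum_congr rfl fun τ _ => hsheet τ, sum_add_distrib, sum_const, sum_ite_eq',
        if_pos (mem_univ σ), card_univ, Fintype.card_fin, smul_eq_mul]

theorem treeCount_trivialCover (hm : 0 < m) (huv : u ≠ v) (hR : ∀ w, R w ↔ w = u ∨ w = v) :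
    (trivialCover G R m).treeCount = m * G.treeCount * G.twoForestCount u v ^ (m - 1) := by
  classical
  have hdisj : Disjoint (α := Finset (Finset G.E)) {T | G.IsSpanningTree T}
      {T | G.IsTwoForest u v T} :=
    disjoint_filter.2 fun T _ hT hT' => hT'.2.1 (hT.2 u v)
  calc (trivialCover G R m).treeCount
      = Nat.card {f : Fin m → Finset G.E //
          ∃ σ, G.IsSpanningTree (f σ) ∧ ∀ τ ≠ σ, G.IsTwoForest u v (f τ)} :=
        Nat.card_congr (sheetEquiv.subtypeEquiv fun S => isSpanningTree_trivialCover_iff hm huv hR)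
    _ = m * G.treeCount * G.twoForestCount u v ^ (m - 1) := by
        rw [treeCount, twoForestCount]
        simp only [Nat.card_eq_fintype_card, Fintype.card_subtype]
        have := card_filter_exists_forall_ne (ι := Fin m) hdisj
        simp only [mem_filter, mem_univ, true_and, Fintype.card_fin] at this
        rw [this, mul_assoc]

end TrivialCover

theorem treeCount_X15 : X15.treeCount = 27 := by
  rw [Multigraph.treeCount_eq_card_filter (4 : Fin 7)]
  decide +kernel

theorem twoForestCount_X15 : X15.twoForestCount (3 : Fin 7) (4 : Fin 7) = 21 :=
  (Multigraph.twoForestCount_eq_card_filter _ _).trans (by decide +kernel)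

/-- For every prime `p` and `n ≥ 0`, the `n`-th layer `X_n` of the degree-`p^n` cyclic
branched cover of `X` with trivial voltage assignment, totally ramified exactly at `v₄`
and `v₅`, has exactly `p^n · 27 · 21^{p^n − 1}` spanning trees. -/
theorem stmt_15 (p n : ℕ) (hp : p.Prime) :
    (@trivialCover X15 (fun v : Fin 7 => v = 3 ∨ v = 4)
      (fun v => @instDecidableOr _ _ (instDecidableEqFin 7 v 3) (instDecidableEqFin 7 v 4)) (p ^ n)).treeCount =
      p ^ n * 27 * 21 ^ (p ^ n - 1) := by
  rw [@treeCount_trivialCover X15 (fun v : Fin 7 => v = 3 ∨ v = 4)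
    (fun v => @instDecidableOr _ _ (instDecidableEqFin 7 v 3) (instDecidableEqFin 7 v 4))
    (p ^ n) (3 : Fin 7) (4 : Fin 7) (pow_pos hp.pos n) (by decide : (3 : Fin 7) ≠ 4)
    fun _ => Iff.rfl, treeCount_X15, twoForestCount_X15]
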